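/- Fix N and σ_n, and let Γ(INR) = √( N ΔG² INR / ( (4G - 4GΔG + 2ΔG²) INR + 8G - 4ΔG + 4/INR ) ) with constants G > ΔG > 0 satisfying 4G - 4GΔG + 2ΔG² > 0 and 8G - 4ΔG > 0. Then Γ is bounded above as INR → ∞: Γ(INR) ≤ √( N ΔG² / (4G - 4GΔG + 2ΔG²) ) for all INR > 0; hence the error probability Q(Γ) is bounded below by Q(√(N ΔG²/(4G - 4GΔG + 2ΔG²))) > 0, i.e., increasing INR alone cannot drive the decision error probability to zero for fixed N. -/
import Mathlib


open Real

noncomputable def Qfun (t : ℝ) : ℝ :=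
  ∫ y in Set.Ioi t, (1 / Real.sqrt (2 * Real.pi)) * Real.exp (-y ^ 2 / 2)

lemma gauss_integrable :
    MeasureTheory.Integrable (fun y : ℝ => (1 / Real.sqrt (2 * Real.pi)) * Real.exp (-y ^ 2 / 2)) := by
  have h : MeasureTheory.Integrable (fun y : ℝ => Real.exp (-(1/2) * y ^ 2)) :=
    integrable_exp_neg_mul_sq (by norm_num)
  have := h.const_mul (1 / Real.sqrt (2 * Real.pi))
  convert this using 2 with y
  ring_nf

lemma Qfun_anti {s t : ℝ} (h : s ≤ t) : Qfun t ≤ Qfun s := by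
  unfold Qfun
  apply MeasureTheory.setIntegral_mono_set (gauss_integrable.integrableOn)
  · filter_upwards with y
    positivity
  · exact Filter.Eventually.of_forall (fun x hx => lt_of_le_of_lt h hx)

lemma Qfun_pos (t : ℝ) : 0 < Qfun t := by
  unfold Qfun
  rw [MeasureTheory.setIntegral_pos_iff_support_of_nonneg_ae]
  · have : Function.support (fun y : ℝ => (1 / Real.sqrt (2 * Real.pi)) * Real.exp (-y ^ 2 / 2)) = Set.univ := by
      ext y; simp only [Function.mem_support, Set.mem_univ, iff_true]
      positivity
    rw [this, Set.univ_inter]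
    simp [Real.volume_Ioi]
  · filter_upwards with y
    positivity
  · exact gauss_integrable.integrableOn

/-- The Q-function argument `Γ(INR)` is bounded above uniformly in `INR`, hence the
error probability `Q(Γ)` is bounded below by a strictly positive constant: increasing
INR alone cannot drive the decision error probability to zero for fixed `N`. -/
theorem error_probability_inr_floor (N G ΔG : ℝ) (hN : 0 < N)
    (hΔG : 0 < ΔG) (hGΔ : ΔG < G)
    (ha : 0 < 4 * G - 4 * G * ΔG + 2 * ΔG ^ 2) (hb : 0 < 8 * G - 4 * ΔG)
    (Γ : ℝ → ℝ)
    (hΓ : ∀ INR, Γ INR = Real.sqrt (N * ΔG ^ 2 * INR /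
      ((4 * G - 4 * G * ΔG + 2 * ΔG ^ 2) * INR + 8 * G - 4 * ΔG + 4 / INR))) :
    (∀ INR > 0, Γ INR ≤ Real.sqrt (N * ΔG ^ 2 / (4 * G - 4 * G * ΔG + 2 * ΔG ^ 2))) ∧
    (∀ INR > 0,
      Qfun (Real.sqrt (N * ΔG ^ 2 / (4 * G - 4 * G * ΔG + 2 * ΔG ^ 2))) ≤ Qfun (Γ INR)) ∧
    0 < Qfun (Real.sqrt (N * ΔG ^ 2 / (4 * G - 4 * G * ΔG + 2 * ΔG ^ 2))) := by
  have key : ∀ INR > 0, Γ INR ≤ Real.sqrt (N * ΔG ^ 2 / (4 * G - 4 * G * ΔG + 2 * ΔG ^ 2)) := by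
    intro INR hINR
    rw [hΓ]
    apply Real.sqrt_le_sqrt
    have hD : 0 < (4 * G - 4 * G * ΔG + 2 * ΔG ^ 2) * INR + 8 * G - 4 * ΔG + 4 / INR := by
      have h4 : 0 < 4 / INR := by positivity
      nlinarith [mul_pos ha hINR]
    rw [div_le_div_iff₀ hD ha]
    have h4 : 0 < 4 / INR := by positivity
    nlinarith [mul_pos hN (pow_pos hΔG 2), mul_pos (mul_pos hN (pow_pos hΔG 2)) hb,
      mul_pos (mul_pos hN (pow_pos hΔG 2)) h4]
  exact ⟨key, fun INR hINR => Qfun_anti (key INR hINR), Qfun_pos _⟩
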